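/- arXiv:2512.07787 — 5 statements merged into one kernel-verified Lean document; each statement's English description precedes it below -/
import Mathlib

section
/- Suppose (X_1,...,X_n) is a random vector with each X_i supported on [0,∞), each F_{X_i} continuous, the vector is NSD (i.e., F_S(t) ≤ ∏_{i=1}^n F_{X_i}(t) for all t ≥ 0 where S = Σ X_i), and the function Φ(x_1,...,x_n) = Σ_{i=1}^n x_i log F_{X_i}(x_i) is simplex dominant (i.e., Φ(x_1,...,x_n) ≥ Φ(s,...,s) with s = Σ x_i, for all (x_1,...,x_n) ∈ [0,∞)^n). Then for all p ∈ (0,1), VaR_p[S] ≥ Σ_{i=1}^n VaR_p[X_i]. -/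
/-!
Put `q i = VaR_p[X_i]` and suppose some `t < ∑ q i` has `F_S(t) ≥ p`. By NSD, `∏ F_i(t) ≥ p`,
so `t log p ≤ Φ(t, …, t)`. Let `r i` be the left endpoint of the support of `X_i`; since
`F_S(∑ r i) = 0`, we have `∑ r i < t`, so some `x` with `r i < x i < q i` has `∑ x i = t`.
Then `0 < F_i(x_i) < p` gives `Φ(x) < t log p`, contradicting simplex dominance.
-/

open MeasureTheory Filter Topology

/-- Value-at-Risk at level `p`: the left-quantile of `Z` under `μ`. -/
noncomputable def VaR {Ω : Type*} [MeasurableSpace Ω] (μ : Measure Ω) (p : ℝ)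
    (Z : Ω → ℝ) : ℝ :=
  sInf {z : ℝ | p ≤ (μ {ω | Z ω ≤ z}).toReal}

noncomputable def distribFun {Ω : Type*} [MeasurableSpace Ω] (μ : Measure Ω) (Z : Ω → ℝ) :
    ℝ → ℝ :=
  fun z => (μ {ω | Z ω ≤ z}).toReal

lemma distribFun_apply {Ω : Type*} [MeasurableSpace Ω] (μ : Measure Ω) (Z : Ω → ℝ) (z : ℝ) :
    distribFun μ Z z = (μ {ω | Z ω ≤ z}).toReal :=
  rfl

lemma exists_sum_eq_of_sum_lt_of_lt_sum {ι : Type*} [Fintype ι] {r q : ι → ℝ} {t : ℝ}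
    (hrq : ∀ i, r i < q i) (hr : ∑ i, r i < t) (hq : t < ∑ i, q i) :
    ∃ x : ι → ℝ, (∀ i, r i < x i) ∧ (∀ i, x i < q i) ∧ ∑ i, x i = t := by
  set θ := (t - ∑ i, r i) / (∑ i, q i - ∑ i, r i)
  have hθ0 : 0 < θ := div_pos (by linarith) (by linarith)
  have hθ1 : θ < 1 := (div_lt_one (by linarith)).mpr (by linarith)
  refine ⟨fun i => r i + θ * (q i - r i), fun i => ?_, fun i => ?_, ?_⟩
  · nlinarith [hrq i]
  · nlinarith [hrq i]
  · rw [Finset.sum_add_distrib, ← Finset.mul_sum, Finset.sum_sub_distrib,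
      div_mul_cancel₀ _ (by linarith)]
    ring

lemma Monotone.exists_last_zero {F : ℝ → ℝ} (hmono : Monotone F) (hF : Continuous F)
    (hneg : ∀ z < 0, F z = 0) {q : ℝ} (hq : 0 < F q) :
    ∃ r, 0 ≤ r ∧ r < q ∧ F r = 0 ∧ ∀ x, r < x → 0 < F x := by
  set S := {x | F x = 0}
  have hIio : Set.Iio 0 ⊆ S := hneg
  have hbdd : BddAbove S := ⟨q, fun x (hx : F x = 0) => hmono.reflect_lt (hx ▸ hq) |>.le⟩
  have hne : S.Nonempty := ⟨-1, hIio (by norm_num)⟩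
  have hr : F (sSup S) = 0 := (isClosed_eq hF continuous_const).csSup_mem hne hbdd
  refine ⟨sSup S, ?_, hmono.reflect_lt (hr ▸ hq), hr, fun x hx => ?_⟩
  · simpa using csSup_le_csSup hbdd Set.nonempty_Iio hIio
  · exact (hr ▸ hmono hx.le).lt_of_ne' (show x ∉ S from notMem_of_csSup_lt hx hbdd)

section distribFun

variable {Ω : Type*} [MeasurableSpace Ω] (μ : Measure Ω) {Z : Ω → ℝ}

lemma distribFun_mono [IsFiniteMeasure μ] (Z : Ω → ℝ) : Monotone (distribFun μ Z) :=
  fun _ _ hab => ENNReal.toReal_mono (measure_ne_top μ _)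
    (measure_mono fun _ h => le_trans h hab)

lemma distribFun_eq_zero_of_neg (hZ : ∀ᵐ ω ∂μ, 0 ≤ Z ω) {z : ℝ} (hz : z < 0) :
    distribFun μ Z z = 0 := by
  have : μ {ω | Z ω ≤ z} = 0 :=
    measure_mono_null (fun ω (h : Z ω ≤ z) => not_le.mpr (h.trans_lt hz)) (ae_iff.mp hZ)
  simp [distribFun, this]

lemma exists_le_distribFun [IsProbabilityMeasure μ] (Z : Ω → ℝ) {p : ℝ} (hp : p < 1) :
    ∃ z, p ≤ distribFun μ Z z := by
  have hmono : Monotone fun z : ℝ => {ω | Z ω ≤ z} := fun _ _ hab _ h => le_trans h hab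
  have hunion : (⋃ z : ℝ, {ω | Z ω ≤ z}) = Set.univ :=
    Set.eq_univ_of_forall fun ω => Set.mem_iUnion.mpr ⟨Z ω, le_refl (Z ω)⟩
  have h := tendsto_measure_iUnion_atTop (μ := μ) hmono
  rw [hunion, measure_univ] at h
  have h' := (ENNReal.tendsto_toReal ENNReal.one_ne_top).comp h
  rw [ENNReal.toReal_one] at h'
  exact (h'.eventually (eventually_ge_nhds hp)).exists

lemma distribFun_sum_eq_zero [IsFiniteMeasure μ] {ι : Type*} [Fintype ι] [Nonempty ι]
    {X : ι → Ω → ℝ} {r : ι → ℝ} (h : ∀ i, distribFun μ (X i) (r i) = 0) :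
    distribFun μ (fun ω => ∑ i, X i ω) (∑ i, r i) = 0 := by
  have hnull : ∀ i, μ {ω | X i ω ≤ r i} = 0 := fun i =>
    ((ENNReal.toReal_eq_zero_iff _).mp (h i)).resolve_right (measure_ne_top μ _)
  have hsub : {ω | ∑ i, X i ω ≤ ∑ i, r i} ⊆ ⋃ i, {ω | X i ω ≤ r i} := by
    intro ω hω
    by_contra! hlt
    simp only [Set.mem_iUnion, Set.mem_ofPred_eq, not_exists, not_le] at hlt
    exact (Finset.sum_lt_sum_of_nonempty Finset.univ_nonempty fun i _ => hlt i).not_ge hω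
  simp [distribFun, measure_mono_null hsub (measure_iUnion_null hnull)]

lemma bddBelow_setOf_le_distribFun (hZ : ∀ᵐ ω ∂μ, 0 ≤ Z ω) {p : ℝ}
    (hp : 0 < p) : BddBelow {z | p ≤ distribFun μ Z z} :=
  ⟨0, fun z (hz : p ≤ _) => not_lt.mp fun hz0 => by
    linarith [distribFun_eq_zero_of_neg μ hZ hz0]⟩

lemma le_distribFun_VaR [IsProbabilityMeasure μ] (hZ : ∀ᵐ ω ∂μ, 0 ≤ Z ω)
    (hcont : Continuous (distribFun μ Z)) {p : ℝ} (hp : p ∈ Set.Ioo (0 : ℝ) 1) :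
    p ≤ distribFun μ Z (VaR μ p Z) :=
  (isClosed_le continuous_const hcont).csInf_mem (exists_le_distribFun μ Z hp.2)
    (bddBelow_setOf_le_distribFun μ hZ hp.1)

lemma distribFun_lt_of_lt_VaR (hZ : ∀ᵐ ω ∂μ, 0 ≤ Z ω) {p z : ℝ} (hp : 0 < p)
    (hz : z < VaR μ p Z) : distribFun μ Z z < p :=
  not_le.mp fun h => (csInf_le (bddBelow_setOf_le_distribFun μ hZ hp) h).not_gt hz

end distribFun

/-- If `(X_1,…,X_n)` are nonnegative with continuous marginal CDFs, the vector is NSD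
(`F_S(t) ≤ ∏ F_{X_i}(t)` for `t ≥ 0`), and `Φ(x) = Σ x_i log F_{X_i}(x_i)` is simplex
dominant, then `VaR_p[S] ≥ Σ VaR_p[X_i]` for all `p ∈ (0,1)`. -/
theorem stmt2 {Ω : Type*} [MeasurableSpace Ω] (μ : Measure Ω) [IsProbabilityMeasure μ]
    {n : ℕ} (X : Fin n → Ω → ℝ)
    (hnonneg : ∀ i, ∀ᵐ ω ∂μ, 0 ≤ X i ω)
    (hcont : ∀ i, Continuous (fun x : ℝ => (μ {ω | X i ω ≤ x}).toReal))
    (hNSD : ∀ t : ℝ, 0 ≤ t →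
      (μ {ω | ∑ i, X i ω ≤ t}).toReal ≤ ∏ i, (μ {ω | X i ω ≤ t}).toReal)
    (hSD : ∀ x : Fin n → ℝ, (∀ i, 0 ≤ x i) →
      (∑ i, x i * Real.log ((μ {ω | X i ω ≤ x i}).toReal)) ≥
      (∑ i, (∑ j, x j) * Real.log ((μ {ω | X i ω ≤ ∑ j, x j}).toReal))) :
    ∀ p ∈ Set.Ioo (0 : ℝ) 1,
      VaR μ p (fun ω => ∑ i, X i ω) ≥ ∑ i, VaR μ p (X i) := by
  simp only [← distribFun_apply] at hNSD hSD
  intro p hp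
  set q := fun i => VaR μ p (X i)
  choose r hr0 hrq hFr hFpos using fun i => (distribFun_mono μ (X i)).exists_last_zero
    (hcont i) (fun _ => distribFun_eq_zero_of_neg μ (hnonneg i))
    (hp.1.trans_le (le_distribFun_VaR μ (hnonneg i) (hcont i) hp))
  refine le_csInf (exists_le_distribFun μ _ hp.2)
    fun t (ht : p ≤ distribFun μ (fun ω => ∑ i, X i ω) t) => ?_
  by_contra! hts
  have ht0 : 0 ≤ t := not_lt.mp fun ht0 => by
    have hS : ∀ᵐ ω ∂μ, 0 ≤ ∑ i, X i ω := by
      filter_upwards [ae_all_iff.mpr hnonneg] with ω hω using Finset.sum_nonneg fun i _ => hω i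
    exact (hp.1.trans_le ht).ne' (distribFun_eq_zero_of_neg μ hS ht0)
  have : Nonempty (Fin n) := by
    obtain ⟨i, -⟩ := Finset.exists_lt_of_sum_lt (f := fun _ => (0 : ℝ)) (g := q)
      (by simpa using ht0.trans_lt hts)
    exact ⟨i⟩
  have hrt : ∑ i, r i < t := (distribFun_mono μ _).reflect_lt <| by
    rw [distribFun_sum_eq_zero μ hFr]
    exact hp.1.trans_le ht
  obtain ⟨x, hrx, hxq, hxt⟩ := exists_sum_eq_of_sum_lt_of_lt_sum hrq hrt hts
  have hx0 : ∀ i, 0 < x i := fun i => (hr0 i).trans_lt (hrx i)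
  have hupper : ∑ i, x i * Real.log (distribFun μ (X i) (x i)) < t * Real.log p := by
    rw [← hxt, Finset.sum_mul]
    refine Finset.sum_lt_sum_of_nonempty Finset.univ_nonempty fun i _ => ?_
    exact mul_lt_mul_of_pos_left (Real.log_lt_log (hFpos i _ (hrx i))
      (distribFun_lt_of_lt_VaR μ (hnonneg i) hp.1 (hxq i))) (hx0 i)
  have hlower : t * Real.log p ≤ ∑ i, t * Real.log (distribFun μ (X i) t) := by
    have hprod := ht.trans (hNSD t ht0)
    rw [← Finset.mul_sum, ← Real.log_prod fun i _ =>
      Finset.prod_ne_zero_iff.mp (hp.1.trans_le hprod).ne' i (Finset.mem_univ i)]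
    exact mul_le_mul_of_nonneg_left (Real.log_le_log hp.1 hprod) ht0
  have hsd := hSD x fun i => (hx0 i).le
  rw [hxt] at hsd
  linarith
end

section
/- For the Pareto Type II (Lomax) distribution with CDF F(x) = 1 - (θ/(θ+x))^α for x ≥ 0 (θ > 0, α > 0), the function φ(x) = x log F(x) is non-increasing on [0,∞) if and only if 0 < α ≤ 1. -/
/-!
With `u = θ / (θ + x) ∈ (0, 1)`, one computes
`φ'(x) = log (1 - u ^ α) + α u ^ α (1 - u) / (1 - u ^ α)`. For `α ≤ 1`, Bernoulli's inequality
`α (1 - u) ≤ 1 - u ^ α` bounds the second term by `u ^ α`, while `log (1 - u ^ α) ≤ -u ^ α`;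
hence `φ' ≤ 0`. For `α > 1`, `0 ≥ φ(y) ≥ -y u ^ α / (1 - u ^ α)` and `y u ^ α ≤ θ u ^ (α - 1) → 0`,
so `φ(y) → 0` as `y → ∞` although `φ(1) < 0`, and `φ` cannot be non-increasing.
-/

open Real Filter Topology Set

noncomputable def lomaxCDF (θ α x : ℝ) : ℝ := 1 - (θ / (θ + x)) ^ α

lemma div_add_mem_Ioo {θ x : ℝ} (hθ : 0 < θ) (hx : 0 < x) : θ / (θ + x) ∈ Ioo 0 1 :=
  ⟨by positivity, (div_lt_one (by positivity)).2 (by linarith)⟩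

lemma lomaxCDF_mem_Ioo {θ α x : ℝ} (hθ : 0 < θ) (hα : 0 < α) (hx : 0 < x) :
    lomaxCDF θ α x ∈ Ioo 0 1 := by
  obtain ⟨hu0, hu1⟩ := div_add_mem_Ioo hθ hx
  have := rpow_pos_of_pos hu0 α
  have := rpow_lt_one hu0.le hu1 hα
  constructor <;> unfold lomaxCDF <;> linarith

lemma mul_log_lomaxCDF_nonpos {θ α x : ℝ} (hθ : 0 < θ) (hα : 0 < α) (hx : 0 ≤ x) :
    x * log (lomaxCDF θ α x) ≤ 0 := by
  rcases hx.eq_or_lt with rfl | hx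
  · simp
  obtain ⟨hF0, hF1⟩ := lomaxCDF_mem_Ioo hθ hα hx
  exact mul_nonpos_of_nonneg_of_nonpos hx.le (log_nonpos hF0.le hF1.le)

lemma log_one_sub_rpow_add_le_zero {α u : ℝ} (hα0 : 0 < α) (hα1 : α ≤ 1) (hu0 : 0 < u)
    (hu1 : u < 1) : log (1 - u ^ α) + α * u ^ α * (1 - u) / (1 - u ^ α) ≤ 0 := by
  have hv0 : 0 < u ^ α := rpow_pos_of_pos hu0 α
  have hv1 : u ^ α < 1 := rpow_lt_one hu0.le hu1 hα0
  have bernoulli : α * (1 - u) ≤ 1 - u ^ α := by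
    have := rpow_one_add_le_one_add_mul_self (s := u - 1) (by linarith) hα0.le hα1
    rw [add_sub_cancel] at this
    linarith
  have hlog : log (1 - u ^ α) ≤ -u ^ α := by
    linarith [log_le_sub_one_of_pos (x := 1 - u ^ α) (by linarith)]
  have hfrac : α * u ^ α * (1 - u) / (1 - u ^ α) ≤ u ^ α := by
    rw [div_le_iff₀ (by linarith)]
    nlinarith
  linarith

lemma hasDerivAt_mul_log_lomaxCDF {θ α x : ℝ} (hθ : 0 < θ) (hα : 0 < α) (hx : 0 < x) :
    HasDerivAt (fun t ↦ t * log (lomaxCDF θ α t))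
      (log (1 - (θ / (θ + x)) ^ α) +
        α * (θ / (θ + x)) ^ α * (1 - θ / (θ + x)) / (1 - (θ / (θ + x)) ^ α)) x := by
  have hθx : θ + x ≠ 0 := by positivity
  have hu0 : θ / (θ + x) ≠ 0 := by positivity
  have hu : HasDerivAt (fun t ↦ θ / (θ + t)) (-(θ / (θ + x) ^ 2)) x := by
    refine ((hasDerivAt_const x θ).fun_div ((hasDerivAt_id' x).const_add θ) hθx).congr_deriv ?_
    ring
  have hF := ((hu.rpow_const (p := α) (Or.inl hu0)).const_sub 1).log
    (lomaxCDF_mem_Ioo hθ hα hx).1.ne'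
  refine ((hasDerivAt_id' x).fun_mul hF).congr_deriv ?_
  rw [rpow_sub_one hu0]
  field_simp
  ring

lemma antitoneOn_mul_log_lomaxCDF {θ α : ℝ} (hθ : 0 < θ) (hα : 0 < α) (hα1 : α ≤ 1) :
    AntitoneOn (fun x ↦ x * log (lomaxCDF θ α x)) (Ioi 0) := by
  refine antitoneOn_of_hasDerivWithinAt_nonpos (convex_Ioi 0) ?_ ?_ ?_
    (f' := fun x ↦ log (1 - (θ / (θ + x)) ^ α) +
        α * (θ / (θ + x)) ^ α * (1 - θ / (θ + x)) / (1 - (θ / (θ + x)) ^ α))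
  · exact fun x hx ↦ (hasDerivAt_mul_log_lomaxCDF hθ hα hx).continuousAt.continuousWithinAt
  · rw [interior_Ioi]
    exact fun x hx ↦ (hasDerivAt_mul_log_lomaxCDF hθ hα hx).hasDerivWithinAt
  · rw [interior_Ioi]
    intro x hx
    obtain ⟨hu0, hu1⟩ := div_add_mem_Ioo hθ hx
    exact log_one_sub_rpow_add_le_zero hα hα1 hu0 hu1

lemma tendsto_div_add_rpow_atTop (θ : ℝ) {p : ℝ} (hp : 0 < p) :
    Tendsto (fun y ↦ (θ / (θ + y)) ^ p) atTop (𝓝 0) := by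
  have hu : Tendsto (fun y ↦ θ / (θ + y)) atTop (𝓝 0) :=
    tendsto_const_nhds.div_atTop (tendsto_atTop_add_const_left _ θ tendsto_id)
  simpa [zero_rpow hp.ne'] using hu.rpow_const (Or.inr hp.le)

lemma tendsto_mul_div_add_rpow_atTop {θ α : ℝ} (hθ : 0 < θ) (hα1 : 1 < α) :
    Tendsto (fun y ↦ y * (θ / (θ + y)) ^ α) atTop (𝓝 0) := by
  have hbound := (tendsto_div_add_rpow_atTop θ (sub_pos.2 hα1)).const_mul θ
  rw [mul_zero] at hbound
  refine tendsto_of_tendsto_of_tendsto_of_le_of_le' tendsto_const_nhds hbound ?_ ?_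
  all_goals filter_upwards [eventually_gt_atTop 0] with y hy
  · positivity
  · have hu0 : 0 < θ / (θ + y) := by positivity
    calc y * (θ / (θ + y)) ^ α = θ * (y / (θ + y)) * (θ / (θ + y)) ^ (α - 1) := by
          rw [rpow_sub_one hu0.ne']; field_simp
      _ ≤ θ * (θ / (θ + y)) ^ (α - 1) := by
          gcongr
          exact mul_le_of_le_one_right hθ.le ((div_le_one (by positivity)).2 (by linarith))

lemma tendsto_mul_log_lomaxCDF_atTop {θ α : ℝ} (hθ : 0 < θ) (hα1 : 1 < α) :
    Tendsto (fun x ↦ x * log (lomaxCDF θ α x)) atTop (𝓝 0) := by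
  have hα : 0 < α := zero_lt_one.trans hα1
  have hlower : Tendsto (fun y ↦ -(y * (θ / (θ + y)) ^ α) / (1 - (θ / (θ + y)) ^ α)) atTop
      (𝓝 0) := by
    have := (tendsto_mul_div_add_rpow_atTop hθ hα1).neg.div
      (tendsto_const_nhds.sub (tendsto_div_add_rpow_atTop θ hα)) (by simp : (1 : ℝ) - 0 ≠ 0)
    rwa [neg_zero, zero_div] at this
  refine tendsto_of_tendsto_of_tendsto_of_le_of_le' hlower tendsto_const_nhds ?_ ?_
  all_goals filter_upwards [eventually_gt_atTop 0] with y hy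
  · have hF0 := (lomaxCDF_mem_Ioo hθ hα hy).1
    unfold lomaxCDF at hF0 ⊢
    calc -(y * (θ / (θ + y)) ^ α) / (1 - (θ / (θ + y)) ^ α)
        = y * (1 - (1 - (θ / (θ + y)) ^ α)⁻¹) := by field_simp; ring
      _ ≤ y * log (1 - (θ / (θ + y)) ^ α) := by gcongr; exact one_sub_inv_le_log_of_pos hF0
  · exact mul_log_lomaxCDF_nonpos hθ hα hy.le

/-- For the Pareto II (Lomax) CDF `F(x) = 1 - (θ/(θ+x))^α` (`θ, α > 0`), the function
`φ(x) = x log F(x)` is non-increasing on `[0,∞)` iff `0 < α ≤ 1`. -/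
theorem stmt7 (θ α : ℝ) (hθ : 0 < θ) (hα : 0 < α) :
    (∀ x y : ℝ, 0 ≤ x → x ≤ y →
        y * Real.log (1 - (θ / (θ + y)) ^ α) ≤
          x * Real.log (1 - (θ / (θ + x)) ^ α)) ↔ α ≤ 1 := by
  constructor
  · intro hanti
    by_contra! hα1
    have hφ1 : 1 * log (lomaxCDF θ α 1) < 0 := by
      obtain ⟨hF0, hF1⟩ := lomaxCDF_mem_Ioo hθ hα one_pos
      simpa using log_neg hF0 hF1
    exact hφ1.not_ge <| le_of_tendsto (tendsto_mul_log_lomaxCDF_atTop hθ hα1) <|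
      (eventually_ge_atTop 1).mono fun y hy ↦ hanti 1 y zero_le_one hy
  · intro hα1 x y hx hxy
    rcases hx.eq_or_lt with rfl | hx
    · -- `log 0 = 0` in Mathlib, so `φ 0 = 0` as in the paper's convention
      simpa [lomaxCDF] using mul_log_lomaxCDF_nonpos hθ hα (x := y) hxy
    · exact antitoneOn_mul_log_lomaxCDF hθ hα hα1 hx (hx.trans_le hxy) hxy
end

section
/- For the standard Lévy distribution with CDF F(x) = erfc(√(θ/(2x))) for x > 0 (θ > 0), the function φ(x) = x log F(x) is non-increasing on (0,∞). Equivalently, setting t = √(θ/(2x)), the function ψ(t) = log(erfc(t)) + t e^{-t²}/(√π erfc(t)) satisfies ψ(t) ≤ 0 for all t > 0. -/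
/-!
With `t = √(θ/(2x))` the chain rule gives `d/dx (x log erfc t) = ψ(t)`, so both claims reduce
to `ψ ≤ 0` on `[0, ∞)`. As `ψ(0) = log 1 = 0`, it suffices that `ψ` is antitone, and
`ψ'(t) = e^{-t²} (2t e^{-t²}/√π - (2t²+1) erfc t) / (√π erfc² t)` has the sign of
`2t e^{-t²} - √π (2t²+1) erfc t`, which is `≤ 0` by a Mills-ratio bound: the difference
`erfc t - 2t e^{-t²}/(√π (2t²+1))` has derivative `-4e^{-t²}/(√π (2t²+1)²) ≤ 0` and
tends to `0` at infinity.
-/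

open MeasureTheory

/-- The complementary error function `erfc(t) = (2/√π) ∫_t^∞ e^{-w²} dw`. -/
noncomputable def erfc (t : ℝ) : ℝ :=
  (2 / Real.sqrt Real.pi) * ∫ w in Set.Ioi t, Real.exp (-w ^ 2)

open Real Set Filter Topology

theorem hasDerivAt_integral_Ioi {E : Type*} [NormedAddCommGroup E] [NormedSpace ℝ E]
    [CompleteSpace E] {f : ℝ → E} (hfi : Integrable f) (hf : Continuous f) (t : ℝ) :
    HasDerivAt (fun u => ∫ x in Ioi u, f x) (-f t) t := by
  have hsplit :
      (fun u => ∫ x in Ioi u, f x) = fun u => (∫ x in u..0, f x) + ∫ x in Ioi 0, f x :=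
    funext fun u =>
      (intervalIntegral.integral_interval_add_Ioi hfi.integrableOn hfi.integrableOn).symm
  rw [hsplit]
  exact (intervalIntegral.integral_hasDerivAt_left hfi.intervalIntegrable
    (hf.stronglyMeasurableAtFilter _ _) hf.continuousAt).add_const _

theorem integrable_exp_neg_sq : Integrable fun w : ℝ => exp (-w ^ 2) := by
  simpa using integrable_exp_neg_mul_sq one_pos

theorem erfc_pos (t : ℝ) : 0 < erfc t := by
  have htail : 0 < ∫ w in Ioi t, exp (-w ^ 2) := by
    rw [setIntegral_pos_iff_support_of_nonneg_ae
      (Eventually.of_forall fun w => (exp_pos _).le) integrable_exp_neg_sq.integrableOn]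
    simp [Function.support, exp_ne_zero]
  exact mul_pos (div_pos two_pos (sqrt_pos.2 pi_pos)) htail

theorem erfc_zero : erfc 0 = 1 := by
  have h := integral_gaussian_Ioi 1
  simp only [neg_mul, one_mul, div_one] at h
  rw [erfc, h]
  field_simp [(sqrt_pos.2 pi_pos).ne']

theorem hasDerivAt_erfc (t : ℝ) : HasDerivAt erfc (-(2 / √π) * exp (-t ^ 2)) t := by
  have h := (hasDerivAt_integral_Ioi integrable_exp_neg_sq (by fun_prop) t).const_mul (2 / √π)
  rwa [mul_neg, ← neg_mul] at h

theorem tendsto_erfc_atTop : Tendsto erfc atTop (𝓝 0) := by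
  have h := (tendsto_integral_Ioi_zero (f := fun w => exp (-w ^ 2)) (μ := volume)
    tendsto_id).const_mul (2 / √π)
  rwa [mul_zero] at h

theorem hasDerivAt_mul_exp_neg_sq (t : ℝ) :
    HasDerivAt (fun t => t * exp (-t ^ 2)) ((1 - 2 * t ^ 2) * exp (-t ^ 2)) t :=
  ((hasDerivAt_id t).mul (hasDerivAt_pow 2 t).neg.exp).congr_deriv (by simp; ring)

theorem tendsto_mul_exp_neg_sq_div_atTop :
    Tendsto (fun t => t * exp (-t ^ 2) / (2 * t ^ 2 + 1)) atTop (𝓝 0) := by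
  refine squeeze_zero' ?_ ?_ (tendsto_exp_neg_atTop_nhds_zero.comp (tendsto_pow_atTop two_ne_zero))
  · filter_upwards [eventually_ge_atTop 0] with t ht
    positivity
  · filter_upwards [eventually_ge_atTop 0] with t ht
    rw [div_le_iff₀ (by positivity)]
    have : t ≤ 2 * t ^ 2 + 1 := by nlinarith
    calc t * exp (-t ^ 2) ≤ (2 * t ^ 2 + 1) * exp (-t ^ 2) := by gcongr
      _ = _ := mul_comm _ _

theorem mul_exp_neg_sq_div_le_erfc (t : ℝ) :
    2 / √π * (t * exp (-t ^ 2) / (2 * t ^ 2 + 1)) ≤ erfc t := by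
  set g := fun t => erfc t - 2 / √π * (t * exp (-t ^ 2) / (2 * t ^ 2 + 1))
  have hpi := sqrt_pos.2 pi_pos
  have hg : ∀ t, HasDerivAt g (-(4 / √π * exp (-t ^ 2) / (2 * t ^ 2 + 1) ^ 2)) t := by
    intro t
    have hden : HasDerivAt (fun t => 2 * t ^ 2 + 1) (4 * t) t :=
      (((hasDerivAt_pow 2 t).const_mul 2).add_const 1).congr_deriv (by push_cast; ring)
    have hden₀ : 2 * t ^ 2 + 1 ≠ 0 := by positivity
    exact ((hasDerivAt_erfc t).sub
      (((hasDerivAt_mul_exp_neg_sq t).div hden hden₀).const_mul (2 / √π))).congr_deriv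
      (by field_simp; ring)
  have hanti : Antitone g := antitone_of_hasDerivAt_nonpos hg fun t => by
    simp only [Pi.zero_apply, neg_nonpos]
    positivity
  have hlim : Tendsto g atTop (𝓝 0) := by
    simpa using tendsto_erfc_atTop.sub (tendsto_mul_exp_neg_sq_div_atTop.const_mul (2 / √π))
  exact sub_nonneg.1 (hanti.le_of_tendsto hlim t)

noncomputable def levyPsi (t : ℝ) : ℝ :=
  log (erfc t) + t * exp (-t ^ 2) / (√π * erfc t)

theorem levyPsi_zero : levyPsi 0 = 0 := by
  simp [levyPsi, erfc_zero]

theorem hasDerivAt_levyPsi (t : ℝ) :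
    HasDerivAt levyPsi (exp (-t ^ 2) *
      (2 * t * exp (-t ^ 2) / √π - (2 * t ^ 2 + 1) * erfc t) / (√π * erfc t ^ 2)) t := by
  have hpi := sqrt_pos.2 pi_pos
  have hF := erfc_pos t
  exact (((hasDerivAt_erfc t).log hF.ne').add ((hasDerivAt_mul_exp_neg_sq t).div
    ((hasDerivAt_erfc t).const_mul √π) (by positivity))).congr_deriv (by field_simp; ring)

theorem antitone_levyPsi : Antitone levyPsi := by
  refine antitone_of_hasDerivAt_nonpos hasDerivAt_levyPsi fun t => ?_
  have hpi := sqrt_pos.2 pi_pos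
  have hmills : 2 * t * exp (-t ^ 2) / √π ≤ (2 * t ^ 2 + 1) * erfc t :=
    calc 2 * t * exp (-t ^ 2) / √π
        _ = (2 * t ^ 2 + 1) * (2 / √π * (t * exp (-t ^ 2) / (2 * t ^ 2 + 1))) := by field_simp
        _ ≤ (2 * t ^ 2 + 1) * erfc t := by gcongr; exact mul_exp_neg_sq_div_le_erfc t
  exact div_nonpos_of_nonpos_of_nonneg
    (mul_nonpos_of_nonneg_of_nonpos (exp_pos _).le (sub_nonpos.2 hmills)) (by positivity)

theorem levyPsi_nonpos {t : ℝ} (ht : 0 ≤ t) : levyPsi t ≤ 0 :=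
  levyPsi_zero ▸ antitone_levyPsi ht

theorem hasDerivAt_sqrt_div_two_mul {θ x : ℝ} (hθ : 0 < θ) (hx : 0 < x) :
    HasDerivAt (fun x => √(θ / (2 * x))) (-√(θ / (2 * x)) / (2 * x)) x := by
  have hu : 0 < θ / (2 * x) := by positivity
  refine (((hasDerivAt_const x θ).div ((hasDerivAt_id x).const_mul 2) (by simp; positivity)).sqrt
    hu.ne').congr_deriv ?_
  simp only [id]
  have hS := sqrt_pos.2 hu
  have hS2 := sq_sqrt hu.le
  generalize √(θ / (2 * x)) = S at hS hS2 ⊢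
  field_simp at hS2 ⊢
  linear_combination hS2

theorem hasDerivAt_mul_log_erfc_sqrt {θ x : ℝ} (hθ : 0 < θ) (hx : 0 < x) :
    HasDerivAt (fun x => x * log (erfc √(θ / (2 * x)))) (levyPsi √(θ / (2 * x))) x := by
  have hF : HasDerivAt (fun x => erfc √(θ / (2 * x)))
      (-(2 / √π) * exp (-√(θ / (2 * x)) ^ 2) * (-√(θ / (2 * x)) / (2 * x))) x :=
    (hasDerivAt_erfc _).comp x (hasDerivAt_sqrt_div_two_mul hθ hx)
  refine ((hasDerivAt_id x).mul (hF.log (erfc_pos _).ne')).congr_deriv ?_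
  generalize √(θ / (2 * x)) = T
  have hpi := sqrt_pos.2 pi_pos
  have := erfc_pos T
  simp only [levyPsi, id]
  field_simp

theorem antitoneOn_mul_log_erfc_sqrt {θ : ℝ} (hθ : 0 < θ) :
    AntitoneOn (fun x => x * log (erfc √(θ / (2 * x)))) (Ioi 0) := by
  refine antitoneOn_of_hasDerivWithinAt_nonpos (f' := fun x => levyPsi √(θ / (2 * x)))
    (convex_Ioi 0)
    (fun x hx => (hasDerivAt_mul_log_erfc_sqrt hθ hx).continuousAt.continuousWithinAt)
    (fun x hx => ?_) (fun x hx => ?_)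
  all_goals rw [interior_Ioi] at hx
  · exact (hasDerivAt_mul_log_erfc_sqrt hθ hx).hasDerivWithinAt
  · exact levyPsi_nonpos (sqrt_nonneg _)

/-- For the standard Lévy CDF `F(x) = erfc(√(θ/(2x)))` (`θ > 0`),
`φ(x) = x log F(x)` is non-increasing on `(0,∞)`; equivalently, with `t = √(θ/(2x))`,
`ψ(t) = log(erfc t) + t e^{-t²}/(√π erfc t) ≤ 0` for all `t > 0`. -/
theorem stmt9 (θ : ℝ) (hθ : 0 < θ) :
    (∀ x y : ℝ, 0 < x → x ≤ y →
        y * Real.log (erfc (Real.sqrt (θ / (2 * y)))) ≤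
          x * Real.log (erfc (Real.sqrt (θ / (2 * x))))) ∧
    (∀ t : ℝ, 0 < t →
        Real.log (erfc t) + t * Real.exp (-t ^ 2) / (Real.sqrt Real.pi * erfc t) ≤ 0) :=
  ⟨fun x y hx hxy => antitoneOn_mul_log_erfc_sqrt hθ hx (hx.trans_le hxy) hxy,
    fun t ht => levyPsi_nonpos ht.le⟩
end

section
/- For 0 < α ≤ 1 and t > 0, the upper incomplete gamma function satisfies the Gautschi-type lower bound Γ(α, t) ≥ t^α e^{-t} / (t + 1 - α). -/
/-! With `g w = w^(α-1) e^{-w}` and `F w = w^α e^{-w} / (w + 1 - α)` one computes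
`F' = (1 - α) g / (w + 1 - α)^2 - g`, so `-F' ≤ g` when `α ≤ 1`. Since `F → 0` at infinity,
`F t = ∫_t^∞ (-F') ≤ ∫_t^∞ g = Γ(α, t)`. -/

open MeasureTheory

/-- The upper incomplete gamma function `Γ(α,t) = ∫_t^∞ w^(α-1) e^{-w} dw`. -/
noncomputable def upperGamma (α t : ℝ) : ℝ :=
  ∫ w in Set.Ioi t, w ^ (α - 1) * Real.exp (-w)

open Real Set Filter Topology

theorem le_integral_Ioi_of_hasDerivAt_of_tendsto_zero {F F' g : ℝ → ℝ} {t : ℝ}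
    (hderiv : ∀ x ∈ Ici t, HasDerivAt F (F' x) x) (hF' : IntegrableOn F' (Ioi t))
    (hg : IntegrableOn g (Ioi t)) (hlim : Tendsto F atTop (𝓝 0))
    (hle : ∀ x ∈ Ioi t, -F' x ≤ g x) :
    F t ≤ ∫ x in Ioi t, g x :=
  calc F t = ∫ x in Ioi t, -F' x := by
        rw [integral_neg, integral_Ioi_of_hasDerivAt_of_tendsto' hderiv hF' hlim, zero_sub, neg_neg]
    _ ≤ ∫ x in Ioi t, g x := setIntegral_mono_on hF'.neg hg measurableSet_Ioi hle

theorem integrableOn_rpow_mul_exp_neg_Ioi {α t : ℝ} (hα : 0 < α) (ht : 0 ≤ t) :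
    IntegrableOn (fun w ↦ w ^ (α - 1) * exp (-w)) (Ioi t) :=
  ((GammaIntegral_convergent hα).mono_set (Ioi_subset_Ioi ht)).congr_fun
    (fun _ _ ↦ mul_comm _ _) measurableSet_Ioi

theorem hasDerivAt_rpow_mul_exp_neg_div {α w : ℝ} (hw : 0 < w) (hD : w + 1 - α ≠ 0) :
    HasDerivAt (fun w ↦ w ^ α * exp (-w) / (w + 1 - α))
      ((1 - α) * (w ^ (α - 1) * exp (-w)) / (w + 1 - α) ^ 2 - w ^ (α - 1) * exp (-w)) w := by
  have hnum : HasDerivAt (fun w ↦ w ^ α * exp (-w))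
      (α * w ^ (α - 1) * exp (-w) + w ^ α * (exp (-w) * (-1))) w :=
    (hasDerivAt_rpow_const (Or.inl hw.ne')).mul ((hasDerivAt_exp (-w)).comp w (hasDerivAt_neg w))
  have hden : HasDerivAt (fun w ↦ w + 1 - α) 1 w := ((hasDerivAt_id w).add_const 1).sub_const α
  refine (hnum.div hden hD).congr_deriv ?_
  rw [show w ^ α = w ^ (α - 1) * w by rw [← rpow_add_one hw.ne']; ring_nf]
  field_simp
  ring

theorem tendsto_rpow_mul_exp_neg_div_atTop (α : ℝ) :
    Tendsto (fun w ↦ w ^ α * exp (-w) / (w + 1 - α)) atTop (𝓝 0) := by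
  have hnum : Tendsto (fun w : ℝ ↦ w ^ α * exp (-w)) atTop (𝓝 0) := by
    simpa using tendsto_rpow_mul_exp_neg_mul_atTop_nhds_zero α 1 one_pos
  have hden : Tendsto (fun w : ℝ ↦ w + 1 - α) atTop atTop :=
    (tendsto_atTop_add_const_right atTop (1 - α) tendsto_id).congr fun w ↦ by simp; ring
  simpa only [mul_zero, div_eq_mul_inv, Pi.inv_apply] using hnum.mul hden.inv_tendsto_atTop

/-- Gautschi-type lower bound: for `0 < α ≤ 1` and `t > 0`,
`Γ(α,t) ≥ t^α e^{-t} / (t + 1 - α)`. -/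
theorem stmt11 (α t : ℝ) (hα0 : 0 < α) (hα1 : α ≤ 1) (ht : 0 < t) :
    t ^ α * Real.exp (-t) / (t + 1 - α) ≤ upperGamma α t := by
  set g : ℝ → ℝ := fun w ↦ w ^ (α - 1) * exp (-w)
  set D : ℝ → ℝ := fun w ↦ (1 - α) * g w / (w + 1 - α) ^ 2
  have hg : IntegrableOn g (Ioi t) := integrableOn_rpow_mul_exp_neg_Ioi hα0 ht.le
  have hD_nonneg : ∀ w ∈ Ioi t, 0 ≤ D w := fun w hw ↦ by
    have := ht.trans hw.out
    have : 0 ≤ 1 - α := by linarith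
    positivity
  have hD : IntegrableOn D (Ioi t) := by
    refine (hg.const_mul ((1 - α) / (t + 1 - α) ^ 2)).mono' (by fun_prop) ?_
    filter_upwards [ae_restrict_mem measurableSet_Ioi] with w hw
    have : 0 ≤ g w := by have := ht.trans hw.out; positivity
    have : 0 < t + 1 - α := by linarith
    rw [norm_of_nonneg (hD_nonneg w hw), show D w = (1 - α) * g w / (w + 1 - α) ^ 2 from rfl,
      mul_div_right_comm]
    gcongr
    linarith [hw.out]
  exact le_integral_Ioi_of_hasDerivAt_of_tendsto_zero (F' := fun w ↦ D w - g w)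
    (fun w hw ↦ hasDerivAt_rpow_mul_exp_neg_div (ht.trans_le hw) (by linarith [hw.out]))
    (hD.sub hg) hg (tendsto_rpow_mul_exp_neg_div_atTop α)
    fun w hw ↦ by linarith [hD_nonneg w hw]
end

section
/- Let φ : [0,∞) → (-∞,0] be defined by φ(x) = x log F(x) and suppose φ is non-increasing, where F is a continuous CDF with F(x) > 0 for x > 0. Let ξ : [0,∞) → [0,∞) be strictly increasing, convex, with ξ(0) = 0, and let F̃ = F ∘ ξ⁻¹ be the CDF of ξ(X). Then φ̃(x) = x log F̃(x) is also non-increasing on [0,∞). (Key steps: convexity with ξ(0)=0 gives ξ(u)/u ≤ ξ(v)/v for 0 < u < v, hence x/ξ⁻¹(x) ≤ y/ξ⁻¹(y) for x < y, and the claim follows since log F ≤ 0.) -/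
/-!
Write `u = ξ⁻¹ x`, so that `x log F̃(x) = (ξ u / u) · (u log F(u))`. The second factor is
non-increasing and non-positive (it vanishes at `0`), while by convexity and `ξ 0 = 0` the first
factor `ξ u / u` is non-decreasing and non-negative; such a product is non-increasing.
-/

open Set

section

variable {𝕜 : Type*} [Field 𝕜] [LinearOrder 𝕜] [IsStrictOrderedRing 𝕜]

theorem ConvexOn.monotoneOn_div_self_of_map_zero {ξ : 𝕜 → 𝕜} (hξconv : ConvexOn 𝕜 (Ici 0) ξ)
    (hξ0 : ξ 0 = 0) : MonotoneOn (fun u => ξ u / u) (Ioi 0) := by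
  intro u hu v hv huv
  simpa [hξ0] using
    hξconv.secant_mono self_mem_Ici (le_of_lt hu) (le_of_lt hv) hu.ne' hv.ne' huv

theorem AntitoneOn.map_mul_of_convexOn {g ξ : 𝕜 → 𝕜}
    (hφ : AntitoneOn (fun u => u * g u) (Ici 0)) (hξconv : ConvexOn 𝕜 (Ici 0) ξ)
    (hξ0 : ξ 0 = 0) (hξnonneg : ∀ u, 0 ≤ u → 0 ≤ ξ u) :
    AntitoneOn (fun u => ξ u * g u) (Ici 0) := by
  intro u (hu : 0 ≤ u) v (hv : 0 ≤ v) huv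
  have hφ_nonpos : ∀ w, 0 ≤ w → w * g w ≤ 0 := fun w hw => by
    simpa using hφ self_mem_Ici hw hw
  have hφ_le : v * g v ≤ u * g u := hφ hu hv huv
  rcases hv.eq_or_lt with rfl | hv0
  · rw [le_antisymm huv hu]
  have hξv_factor : ξ v * g v = ξ v / v * (v * g v) := by field_simp
  have hslope_nonneg : 0 ≤ ξ v / v := div_nonneg (hξnonneg v hv) hv
  rcases hu.eq_or_lt with rfl | hu0
  · simpa [hξ0, hξv_factor] using mul_nonpos_of_nonneg_of_nonpos hslope_nonneg (hφ_nonpos v hv)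
  calc ξ v * g v = ξ v / v * (v * g v) := hξv_factor
    _ ≤ ξ v / v * (u * g u) := mul_le_mul_of_nonneg_left hφ_le hslope_nonneg
    _ ≤ ξ u / u * (u * g u) :=
      mul_le_mul_of_nonpos_right (hξconv.monotoneOn_div_self_of_map_zero hξ0 hu0 hv0 huv)
        (hφ_nonpos u hu)
    _ = ξ u * g u := by field_simp

end

theorem stmt19_general (F ξ ξinv : ℝ → ℝ)
    (hφ : ∀ x y : ℝ, 0 ≤ x → x ≤ y → y * Real.log (F y) ≤ x * Real.log (F x))
    (hξmono : StrictMonoOn ξ (Set.Ici 0))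
    (hξconv : ConvexOn ℝ (Set.Ici 0) ξ)
    (hξ0 : ξ 0 = 0)
    (hξmap : ∀ x : ℝ, 0 ≤ x → 0 ≤ ξ x)
    (hinv₁ : ∀ x : ℝ, 0 ≤ x → ξ (ξinv x) = x)
    (hinvmap : ∀ x : ℝ, 0 ≤ x → 0 ≤ ξinv x) :
    ∀ x y : ℝ, 0 ≤ x → x ≤ y →
      y * Real.log (F (ξinv y)) ≤ x * Real.log (F (ξinv x)) := by
  intro x y hx hxy
  have hy : 0 ≤ y := hx.trans hxy
  have hinv_le : ξinv x ≤ ξinv y := by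
    rw [← hξmono.le_iff_le (hinvmap x hx) (hinvmap y hy), hinv₁ x hx, hinv₁ y hy]
    exact hxy
  have hφ' : AntitoneOn (fun u => u * Real.log (F u)) (Ici 0) := fun a ha _ _ hab => hφ a _ ha hab
  simpa only [hinv₁ x hx, hinv₁ y hy] using
    (hφ'.map_mul_of_convexOn hξconv hξ0 hξmap) (hinvmap x hx) (hinvmap y hy) hinv_le

/-- Preservation of the non-increasing property of `φ(x) = x log F(x)` under strictly
increasing convex transformations `ξ` with `ξ(0) = 0`: if `F̃ = F ∘ ξ⁻¹` (here `ξinv`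
is a two-sided inverse of `ξ` on `[0,∞)`), then `φ̃(x) = x log F̃(x)` is also
non-increasing on `[0,∞)`. -/
theorem stmt19 (F ξ ξinv : ℝ → ℝ)
    (hFcont : Continuous F)
    (hFmono : Monotone F)
    (hFpos : ∀ x : ℝ, 0 < x → 0 < F x)
    (hφ : ∀ x y : ℝ, 0 ≤ x → x ≤ y → y * Real.log (F y) ≤ x * Real.log (F x))
    (hξmono : StrictMonoOn ξ (Set.Ici 0))
    (hξconv : ConvexOn ℝ (Set.Ici 0) ξ)
    (hξ0 : ξ 0 = 0)
    (hξmap : ∀ x : ℝ, 0 ≤ x → 0 ≤ ξ x)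
    (hinv₁ : ∀ x : ℝ, 0 ≤ x → ξ (ξinv x) = x)
    (hinv₂ : ∀ x : ℝ, 0 ≤ x → ξinv (ξ x) = x)
    (hinvmap : ∀ x : ℝ, 0 ≤ x → 0 ≤ ξinv x) :
    ∀ x y : ℝ, 0 ≤ x → x ≤ y →
      y * Real.log (F (ξinv y)) ≤ x * Real.log (F (ξinv x)) :=
  stmt19_general F ξ ξinv hφ hξmono hξconv hξ0 hξmap hinv₁ hinvmap
end
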